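/- arXiv:2510.15483 — 4 statements merged into one kernel-verified Lean document; each statement's English description precedes it below -/
import Mathlib

section
/- Let r ∈ (0, 2) and let J : [0, ∞) → [0, ∞) be a concave, nondecreasing function with J(0) = 0. Then there exists a constant C > 0 depending only on r such that: whenever A > 0, B > 0 and z > 0 satisfy z² ≤ A² + B² J(z^r), it holds that J(z) ≤ C · J(A) · [ 1 + J(A^r) (B/A)² ]^{1/(2−r)}. (Concavity transfer lemma, Lemma 2.1 of van der Vaart–Wellner type.) -/
/-- **Concavity transfer lemma** (Lemma 2.1 of van der Vaart–Wellner type).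
For `r ∈ (0,2)` there is a constant `C > 0` depending only on `r` such that for every
concave nondecreasing `J : [0,∞) → [0,∞)` with `J 0 = 0` and all positive `A, B, z` with
`z² ≤ A² + B² J(z^r)`, one has `J z ≤ C · J A · (1 + J(A^r) (B/A)²)^{1/(2-r)}`. -/
theorem stmt_6 (r : ℝ) (hr : r ∈ Set.Ioo (0 : ℝ) 2) :
    ∃ C : ℝ, 0 < C ∧
      ∀ J : ℝ → ℝ, ConcaveOn ℝ (Set.Ici 0) J → MonotoneOn J (Set.Ici 0) →
        J 0 = 0 → (∀ x : ℝ, 0 ≤ x → 0 ≤ J x) →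
        ∀ A B z : ℝ, 0 < A → 0 < B → 0 < z →
          z ^ 2 ≤ A ^ 2 + B ^ 2 * J (z ^ r) →
          J z ≤ C * J A * (1 + J (A ^ r) * (B / A) ^ 2) ^ (1 / (2 - r)) := by
  obtain ⟨hr0, hr2⟩ := hr
  have h2r : (0:ℝ) < 2 - r := by linarith
  set C : ℝ := Real.sqrt 2 + (2:ℝ) ^ (1 / (2 - r)) with hCdef
  have hsqrt2 : (1:ℝ) ≤ Real.sqrt 2 := by
    rw [show (1:ℝ) = Real.sqrt 1 by simp]
    exact Real.sqrt_le_sqrt (by norm_num)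
  have h2pow : (0:ℝ) < (2:ℝ) ^ (1 / (2 - r)) := Real.rpow_pos_of_pos (by norm_num) _
  have hC1 : (1:ℝ) ≤ C := by
    have := h2pow; simp only [hCdef]; linarith
  refine ⟨C, by linarith, ?_⟩
  intro J hconc hmono hJ0 hJnn A B z hA hB hz hineq
  -- subhomogeneity: J (c * t) ≤ c * J t for c ≥ 1, t ≥ 0
  have sub : ∀ c t : ℝ, 1 ≤ c → 0 ≤ t → J (c * t) ≤ c * J t := by
    intro c t hc ht
    have hc0 : (0:ℝ) < c := by linarith
    have hct : c * t ∈ Set.Ici (0:ℝ) := by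
      simp only [Set.mem_Ici]; positivity
    have h0 : (0:ℝ) ∈ Set.Ici (0:ℝ) := Set.self_mem_Ici
    have ha : (0:ℝ) ≤ 1 / c := by positivity
    have hb : (0:ℝ) ≤ 1 - 1 / c := by
      have : 1 / c ≤ 1 := by rw [div_le_one hc0]; exact hc
      linarith
    have hab : 1 / c + (1 - 1 / c) = 1 := by ring
    have key := hconc.2 hct h0 ha hb hab
    simp only [smul_eq_mul, mul_zero, hJ0, add_zero] at key
    have heq : 1 / c * (c * t) = t := by field_simp
    rw [heq] at key
    have : 1 / c * J (c * t) ≤ J t := by linarith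
    calc J (c * t) = c * (1 / c * J (c * t)) := by field_simp
      _ ≤ c * J t := by nlinarith
  set K : ℝ := J (A ^ r) * (B / A) ^ 2 with hKdef
  have hK0 : 0 ≤ K := by
    have := hJnn (A ^ r) (le_of_lt (Real.rpow_pos_of_pos hA r))
    positivity
  set D : ℝ := (1 + K) ^ (1 / (2 - r)) with hDdef
  have h1K : (0:ℝ) < 1 + K := by linarith
  have hD1 : (1:ℝ) ≤ D := Real.one_le_rpow (by linarith) (by positivity)
  have hCD1 : 1 ≤ C * D := by nlinarith [mul_le_mul hC1 hD1 zero_le_one (by linarith : (0:ℝ) ≤ C)]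
  -- main claim: z ≤ C * A * D
  have hzle : z ≤ C * A * D := by
    rcases le_or_gt z A with hzA | hzA
    · have h1 : A * 1 ≤ A * (C * D) := mul_le_mul_of_nonneg_left hCD1 (le_of_lt hA)
      nlinarith
    · -- z > A, so J(z^r) ≤ (z/A)^r J(A^r)
      have hu1 : 1 ≤ z / A := by rw [le_div_iff₀ hA]; linarith
      have hu0 : 0 < z / A := by linarith
      have hzr : z ^ r = (z / A) ^ r * A ^ r := by
        rw [← Real.mul_rpow (le_of_lt hu0) (le_of_lt hA)]
        field_simp
      have hur1 : 1 ≤ (z / A) ^ r := Real.one_le_rpow hu1 (le_of_lt hr0)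
      have hur0 : 0 < (z / A) ^ r := Real.rpow_pos_of_pos hu0 r
      have hJz : J (z ^ r) ≤ (z / A) ^ r * J (A ^ r) := by
        rw [hzr]
        exact sub _ _ hur1 (le_of_lt (Real.rpow_pos_of_pos hA r))
      have hmain : z ^ 2 ≤ A ^ 2 + K * A ^ 2 * (z / A) ^ r := by
        have h3 : B ^ 2 * J (z ^ r) ≤ B ^ 2 * ((z / A) ^ r * J (A ^ r)) :=
          mul_le_mul_of_nonneg_left hJz (by positivity)
        have h4 : B ^ 2 * ((z / A) ^ r * J (A ^ r)) = K * A ^ 2 * (z / A) ^ r := by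
          rw [hKdef]; field_simp
        linarith
      rcases le_or_gt (z ^ 2) (2 * A ^ 2) with hz2 | hz2
      · -- z ≤ √2 A
        have hs : z ≤ Real.sqrt 2 * A := by
          have h1 : Real.sqrt (z ^ 2) ≤ Real.sqrt (2 * A ^ 2) := Real.sqrt_le_sqrt hz2
          rwa [Real.sqrt_sq (le_of_lt hz), Real.sqrt_mul (by norm_num),
            Real.sqrt_sq (le_of_lt hA)] at h1
        have hsC : Real.sqrt 2 ≤ C := by rw [hCdef]; linarith
        have hCD : Real.sqrt 2 * A ≤ C * A * D :=
          calc Real.sqrt 2 * A ≤ C * A := mul_le_mul_of_nonneg_right hsC (le_of_lt hA)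
            _ ≤ C * A * D := le_mul_of_one_le_right (by positivity) hD1
        linarith
      · -- z² > 2A²: (z/A)^(2-r) ≤ 2K
        set u := z / A with hu
        have hu2cast : u ^ ((2:ℝ)) = u ^ 2 := by
          rw [← Real.rpow_natCast u 2]; norm_num
        have hu2 : u ^ 2 = z ^ 2 / A ^ 2 := by
          rw [hu]; field_simp
        have hKu : u ^ 2 ≤ 1 + K * u ^ r := by
          rw [hu2, div_le_iff₀ (by positivity)]
          calc z ^ 2 ≤ A ^ 2 + K * A ^ 2 * u ^ r := hmain
            _ = (1 + K * u ^ r) * A ^ 2 := by ring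
        have h1u : (1:ℝ) ≤ u ^ 2 / 2 := by
          rw [hu2, div_div, le_div_iff₀ (by positivity)]
          linarith
        have hhalf : u ^ 2 / 2 ≤ K * u ^ r := by linarith
        have hsub2 : u ^ ((2:ℝ) - r) ≤ 2 * (1 + K) := by
          rw [Real.rpow_sub hu0, hu2cast, div_le_iff₀ hur0]
          nlinarith
        have hfinal : u ≤ (2:ℝ) ^ (1 / (2 - r)) * D := by
          have h1 : (u ^ ((2:ℝ) - r)) ^ (1 / (2 - r)) ≤ (2 * (1 + K)) ^ (1 / (2 - r)) :=
            Real.rpow_le_rpow (le_of_lt (Real.rpow_pos_of_pos hu0 _)) hsub2 (by positivity)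
          have h2 : (u ^ ((2:ℝ) - r)) ^ (1 / (2 - r)) = u := by
            rw [← Real.rpow_mul (le_of_lt hu0), mul_one_div,
              div_self (ne_of_gt h2r), Real.rpow_one]
          have h3 : (2 * (1 + K)) ^ (1 / (2 - r)) = (2:ℝ) ^ (1 / (2 - r)) * D := by
            rw [Real.mul_rpow (by norm_num) (le_of_lt h1K)]
          rw [h2, h3] at h1
          exact h1
        have hzu : z = u * A := by rw [hu]; field_simp
        rw [hzu]
        have hupos : u * A ≤ ((2:ℝ) ^ (1 / (2 - r)) * D) * A :=
          mul_le_mul_of_nonneg_right hfinal (le_of_lt hA)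
        have h2C : (2:ℝ) ^ (1 / (2 - r)) ≤ C := by
          rw [hCdef]; linarith [Real.sqrt_nonneg 2]
        calc u * A ≤ (2:ℝ) ^ (1 / (2 - r)) * D * A := hupos
          _ ≤ C * D * A :=
              mul_le_mul_of_nonneg_right
                (mul_le_mul_of_nonneg_right h2C (by linarith)) (le_of_lt hA)
          _ = C * A * D := by ring
  -- finish
  have hz0 : z ∈ Set.Ici (0:ℝ) := le_of_lt hz
  have hCAD : C * D * A ∈ Set.Ici (0:ℝ) := by
    simp only [Set.mem_Ici]; positivity
  have step1 : J z ≤ J (C * D * A) := by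
    apply hmono hz0 hCAD
    calc z ≤ C * A * D := hzle
      _ = C * D * A := by ring
  have step2 : J (C * D * A) ≤ (C * D) * J A := sub _ _ hCD1 (le_of_lt hA)
  calc J z ≤ (C * D) * J A := le_trans step1 step2
    _ = C * J A * D := by ring
end

section
/- There exists a universal constant C > 0 such that the following holds. Let J : [0, ∞) → [0, ∞) be a concave, nondecreasing function with J(0) = 0, let T ≥ 1, and let σ > 0 and σ̂ > 0 satisfy σ² ≤ σ̂² + T^{−1/2} J(σ). Then J(σ) ≤ C ( J(σ̂) + J(σ̂)² / (σ̂² √T) ). (Deterministic local entropy transfer from the true to the empirical radius.) -/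
/-- **Deterministic local entropy transfer from the true to the empirical radius.**
There is a universal constant `C > 0` such that for every concave nondecreasing
`J : [0,∞) → [0,∞)` with `J 0 = 0`, every `T ≥ 1` and positive `σ, σ̂` with
`σ² ≤ σ̂² + T^{-1/2} J(σ)`, one has `J σ ≤ C (J σ̂ + J σ̂² / (σ̂² √T))`. -/
theorem stmt_7 :
    ∃ C : ℝ, 0 < C ∧
      ∀ J : ℝ → ℝ, ConcaveOn ℝ (Set.Ici 0) J → MonotoneOn J (Set.Ici 0) →
        J 0 = 0 → (∀ x : ℝ, 0 ≤ x → 0 ≤ J x) →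
        ∀ T σ σhat : ℝ, 1 ≤ T → 0 < σ → 0 < σhat →
          σ ^ 2 ≤ σhat ^ 2 + T ^ (-(1 / 2 : ℝ)) * J σ →
          J σ ≤ C * (J σhat + J σhat ^ 2 / (σhat ^ 2 * Real.sqrt T)) := by
  refine ⟨1, one_pos, ?_⟩
  intro J hconc hmono hJ0 hJnn T σ σhat hT hσ hσhat hineq
  have hT0 : (0:ℝ) < T := lt_of_lt_of_le one_pos hT
  have hsT : (1:ℝ) ≤ Real.sqrt T := by
    rw [show (1:ℝ) = Real.sqrt 1 from (Real.sqrt_one).symm]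
    exact Real.sqrt_le_sqrt hT
  have hsT0 : 0 < Real.sqrt T := lt_of_lt_of_le one_pos hsT
  have hJσhat : 0 ≤ J σhat := hJnn _ hσhat.le
  have hsecond : 0 ≤ J σhat ^ 2 / (σhat ^ 2 * Real.sqrt T) := by positivity
  rw [one_mul]
  rcases le_or_gt σ σhat with h | h
  · have := hmono (Set.mem_Ici.2 hσ.le) (Set.mem_Ici.2 hσhat.le) h
    linarith
  · -- σhat < σ : use concavity to get σhat * J σ ≤ σ * J σhat
    have hkey : σhat * J σ ≤ σ * J σhat := by
      have ha : (0:ℝ) ≤ σhat / σ := by positivity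
      have hb : (0:ℝ) ≤ 1 - σhat / σ := by
        have : σhat / σ ≤ 1 := (div_le_one hσ).2 h.le
        linarith
      have hc := hconc.2 (Set.mem_Ici.2 hσ.le) (Set.mem_Ici.2 le_rfl) ha hb (by ring)
      simp only [smul_eq_mul, mul_zero, add_zero, hJ0] at hc
      rw [div_mul_cancel₀ _ hσ.ne'] at hc
      have h1 : σhat / σ * J σ ≤ J σhat := by linarith
      have h2 : σ * (σhat / σ * J σ) ≤ σ * J σhat :=
        mul_le_mul_of_nonneg_left h1 hσ.le
      calc σhat * J σ = σ * (σhat / σ * J σ) := by field_simp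
        _ ≤ σ * J σhat := h2
    have hrpow : T ^ (-(1/2 : ℝ)) = (Real.sqrt T)⁻¹ := by
      rw [Real.rpow_neg hT0.le, Real.sqrt_eq_rpow]
    rw [hrpow] at hineq
    set a := σ / σhat with hadef
    have ha1 : 1 ≤ a := (one_le_div hσhat).2 h.le
    have haσ : σ = a * σhat := by rw [hadef, div_mul_cancel₀ _ hσhat.ne']
    set b := J σhat / (σhat ^ 2 * Real.sqrt T) with hbdef
    have hb0 : 0 ≤ b := by positivity
    have hbJ : J σhat = b * (σhat ^ 2 * Real.sqrt T) := by
      rw [hbdef, div_mul_cancel₀ _ (by positivity)]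
    -- J σ ≤ a * J σhat
    have hJσ : J σ ≤ a * J σhat := by
      rw [hadef, div_mul_eq_mul_div, le_div_iff₀ hσhat]
      linarith [hkey]
    -- a^2 ≤ 1 + a * b
    have hquad : a ^ 2 ≤ 1 + a * b := by
      have hmul : (Real.sqrt T)⁻¹ * J σ ≤ (Real.sqrt T)⁻¹ * (a * J σhat) :=
        mul_le_mul_of_nonneg_left hJσ (by positivity)
      have h3 : σ ^ 2 ≤ σhat ^ 2 + (Real.sqrt T)⁻¹ * (a * J σhat) := by linarith
      rw [haσ, hbJ] at h3
      have hinv : (Real.sqrt T)⁻¹ * (a * (b * (σhat ^ 2 * Real.sqrt T)))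
          = a * b * σhat ^ 2 := by
        field_simp
      rw [hinv] at h3
      have hσhat2 : (0:ℝ) < σhat ^ 2 := by positivity
      nlinarith [h3]
    -- hence a ≤ 1 + b
    have ha1b : a ≤ 1 + b := by nlinarith [hquad, ha1]
    -- conclude
    have hfinal : J σhat ^ 2 / (σhat ^ 2 * Real.sqrt T) = b * J σhat := by
      rw [hbdef]; ring
    rw [hfinal]
    nlinarith [mul_le_mul_of_nonneg_right ha1b hJσhat, hJσ]
end

section
/- Assume the margin condition: there exist M > 0, c > 0 and ν ∈ (0, ∞) such that P( Δ_min(X) ≤ M u ) ≤ (c u)^ν for all u ≥ 0. Assume the overlap condition: π(a*(x)|x) ≥ β for all x, for some β > 0. Then Var_π( π*(A|X)/π(A|X) ) ≤ (K/β) · ( R(π) − R* )^{ν/(ν+1)}, where K = ( (ν+1)^{(ν+1)/ν} c / (ν M) )^{ν/(ν+1)}. (Variance–excess risk Hölder bound.) -/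
open MeasureTheory

lemma meas_finset_inf' {𝒳 𝒜 : Type*} [MeasurableSpace 𝒳] (s : Finset 𝒜) (hs : s.Nonempty)
    (f : 𝒳 → 𝒜 → ℝ) (hf : ∀ a, Measurable fun x => f x a) :
    Measurable fun x => s.inf' hs (f x) := by
  induction hs using Finset.Nonempty.cons_induction with
  | singleton a => simp only [Finset.inf'_singleton]; exact hf a
  | cons a s ha hsne ih =>
      simp only [Finset.inf'_cons hsne]
      exact (hf a).min ih

lemma alg_opt (ν c M E : ℝ) (hν : 0 < ν) (hc : 0 < c) (hM : 0 < M) (hE : 0 < E) :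
    (c * (E / (ν * c ^ ν * M)) ^ ((1:ℝ)/(ν+1))) ^ ν
      + E / (M * (E / (ν * c ^ ν * M)) ^ ((1:ℝ)/(ν+1)))
    = (ν + 1) * (c / (ν * M)) ^ (ν/(ν+1)) * E ^ (ν/(ν+1)) := by
  have hν1 : (0:ℝ) < ν + 1 := by linarith
  have hcν : (0:ℝ) < c ^ ν := Real.rpow_pos_of_pos hc ν
  have hXpos : 0 < E / (ν * c ^ ν * M) := by positivity
  set X := E / (ν * c ^ ν * M) with hX
  set u := X ^ ((1:ℝ)/(ν+1)) with hu_def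
  have hupos : 0 < u := Real.rpow_pos_of_pos hXpos _
  have hup : u ^ (ν+1) = X := by
    rw [hu_def, ← Real.rpow_mul hXpos.le, one_div, inv_mul_cancel₀ hν1.ne', Real.rpow_one]
  have hE' : E = ν * c ^ ν * M * u ^ (ν+1) := by
    rw [hup, hX]; field_simp
  have h2 : E / (M * u) = ν * c ^ ν * u ^ ν := by
    rw [hE', Real.rpow_add hupos, Real.rpow_one]
    field_simp
  have h1 : (c * u) ^ ν = c ^ ν * u ^ ν := Real.mul_rpow hc.le hupos.le
  have huν : u ^ ν = X ^ (ν/(ν+1)) := by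
    rw [hu_def, ← Real.rpow_mul hXpos.le, one_div, inv_mul_eq_div]
  have key : c ^ ν * u ^ ν = (c / (ν * M)) ^ (ν/(ν+1)) * E ^ (ν/(ν+1)) := by
    rw [huν]
    have hL : 0 < c ^ ν * X ^ (ν/(ν+1)) := by positivity
    have hR : 0 < (c / (ν * M)) ^ (ν/(ν+1)) * E ^ (ν/(ν+1)) := by positivity
    have hlog : Real.log (c ^ ν * X ^ (ν/(ν+1)))
        = Real.log ((c / (ν * M)) ^ (ν/(ν+1)) * E ^ (ν/(ν+1))) := by
      rw [Real.log_mul (by positivity) (by positivity),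
          Real.log_mul (by positivity) (by positivity),
          Real.log_rpow hc, Real.log_rpow hXpos, Real.log_rpow (by positivity), Real.log_rpow hE,
          hX, Real.log_div hE.ne' (by positivity),
          Real.log_div hc.ne' (by positivity),
          Real.log_mul (by positivity) hM.ne',
          Real.log_mul hν.ne' hcν.ne',
          Real.log_rpow hc,
          Real.log_mul hν.ne' hM.ne']
      field_simp
      ring
    calc c ^ ν * X ^ (ν/(ν+1)) = Real.exp (Real.log (c ^ ν * X ^ (ν/(ν+1)))) := (Real.exp_log hL).symm
      _ = Real.exp (Real.log ((c / (ν * M)) ^ (ν/(ν+1)) * E ^ (ν/(ν+1)))) := by rw [hlog]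
      _ = _ := Real.exp_log hR
  have comb : c ^ ν * u ^ ν + ν * c ^ ν * u ^ ν = (ν+1) * (c ^ ν * u ^ ν) := by ring
  rw [h1, h2, comb, key]
  ring

/-- **Variance–excess risk Hölder bound.** Under the margin condition
`P(Δ_min(X) ≤ M u) ≤ (c u)^ν` and the overlap condition `π(a*(x)|x) ≥ β`,
`Var_π(π*(A|X)/π(A|X)) ≤ (K/β) (R(π) − R*)^{ν/(ν+1)}` with
`K = ((ν+1)^{(ν+1)/ν} c/(ν M))^{ν/(ν+1)}`. -/
theorem stmt_8 {𝒳 𝒜 : Type*} [MeasurableSpace 𝒳] [MeasurableSpace 𝒜]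
    [Fintype 𝒜] [DecidableEq 𝒜] [Nontrivial 𝒜]
    (μX : Measure 𝒳) [IsProbabilityMeasure μX]
    (μ : 𝒳 → 𝒜 → ℝ)
    (hμm : ∀ a, Measurable fun x => μ x a)
    (hμb : ∃ Cb : ℝ, ∀ x a, |μ x a| ≤ Cb)
    (astar : 𝒳 → 𝒜) (hastarm : Measurable astar)
    (hastar : ∀ x a, μ x (astar x) ≤ μ x a)
    (π : 𝒳 → 𝒜 → ℝ)
    (hπm : ∀ a, Measurable fun x => π x a)
    (hπpos : ∀ x a, 0 < π x a)
    (hπsum : ∀ x, ∑ a, π x a = 1)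
    (M c ν β : ℝ) (hM : 0 < M) (hc : 0 < c) (hν : 0 < ν) (hβ : 0 < β)
    (margin : ∀ u : ℝ, 0 ≤ u →
      (μX {x | sInf ((fun a => μ x a - μ x (astar x)) '' {a | a ≠ astar x}) ≤ M * u}).toReal
        ≤ (c * u) ^ ν)
    (overlap : ∀ x, β ≤ π x (astar x)) :
    (∫ x, ∑ a, π x a * ((if a = astar x then (1 : ℝ) else 0) / π x a) ^ 2 ∂μX) -
        (∫ x, ∑ a, π x a * ((if a = astar x then (1 : ℝ) else 0) / π x a) ∂μX) ^ 2 ≤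
      ((ν + 1) ^ ((ν + 1) / ν) * c / (ν * M)) ^ (ν / (ν + 1)) / β *
        ((∫ x, ∑ a, π x a * μ x a ∂μX) - ∫ x, μ x (astar x) ∂μX) ^ (ν / (ν + 1)) := by
  classical
  obtain ⟨Cb, hCb⟩ := hμb
  have hν1 : (0:ℝ) < ν + 1 := by linarith
  have hppos : 0 < ν / (ν + 1) := div_pos hν hν1
  have hqpos : ∀ x, 0 < π x (astar x) := fun x => hπpos x (astar x)
  have hqle1 : ∀ x, π x (astar x) ≤ 1 := by
    intro x
    rw [← hπsum x]
    exact Finset.single_le_sum (fun a _ => (hπpos x a).le) (Finset.mem_univ _)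
  -- pointwise simplification of the two integrands
  have hsum2 : ∀ x, (∑ a, π x a * ((if a = astar x then (1:ℝ) else 0) / π x a) ^ 2)
      = (π x (astar x))⁻¹ := by
    intro x
    have h : ∀ a ∈ Finset.univ, π x a * ((if a = astar x then (1:ℝ) else 0) / π x a) ^ 2
        = if a = astar x then (π x (astar x))⁻¹ else 0 := by
      intro a _
      by_cases h : a = astar x
      · subst h
        rw [if_pos rfl, if_pos rfl]
        have hne := (hπpos x (astar x)).ne'
        field_simp
      · simp [h]
    rw [Finset.sum_congr rfl h, Finset.sum_ite_eq' Finset.univ (astar x)]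
    simp
  have hsum1 : ∀ x, (∑ a, π x a * ((if a = astar x then (1:ℝ) else 0) / π x a)) = 1 := by
    intro x
    have h : ∀ a ∈ Finset.univ, π x a * ((if a = astar x then (1:ℝ) else 0) / π x a)
        = if a = astar x then 1 else 0 := by
      intro a _
      by_cases h : a = astar x
      · subst h
        rw [if_pos rfl]
        have hne := (hπpos x (astar x)).ne'
        field_simp
      · simp [h]
    rw [Finset.sum_congr rfl h, Finset.sum_ite_eq' Finset.univ (astar x)]
    simp
  -- measurability of x ↦ μ x (astar x)
  have huniv_ne : (Finset.univ : Finset 𝒜).Nonempty := Finset.univ_nonempty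
  have hms_eq : (fun x => μ x (astar x))
      = fun x => Finset.univ.inf' huniv_ne (fun a => μ x a) := by
    funext x
    exact le_antisymm (Finset.le_inf' _ _ fun a _ => hastar x a)
      (Finset.inf'_le _ (Finset.mem_univ _))
  have hms_meas : Measurable fun x => μ x (astar x) := by
    rw [hms_eq]; exact meas_finset_inf' _ _ _ hμm
  -- facts about the gap Δ
  have hΔbdd : ∀ x, BddBelow ((fun a => μ x a - μ x (astar x)) '' {a | a ≠ astar x}) :=
    fun x => (Set.toFinite _).bddBelow
  have hΔle : ∀ x a, a ≠ astar x →
      sInf ((fun a => μ x a - μ x (astar x)) '' {a | a ≠ astar x}) ≤ μ x a - μ x (astar x) :=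
    fun x a ha => csInf_le (hΔbdd x) ⟨a, ha, rfl⟩
  -- the set where Δ ≤ 0 is null
  have hnull : μX {x | sInf ((fun a => μ x a - μ x (astar x)) '' {a | a ≠ astar x}) ≤ 0} = 0 := by
    have h0 := margin 0 le_rfl
    rw [mul_zero, mul_zero, Real.zero_rpow hν.ne'] at h0
    have hfin : μX {x | sInf ((fun a => μ x a - μ x (astar x)) '' {a | a ≠ astar x}) ≤ 0} ≠ ⊤ :=
      measure_ne_top μX _
    have := ENNReal.toReal_eq_zero_iff (μX {x | sInf ((fun a => μ x a - μ x (astar x)) '' {a | a ≠ astar x}) ≤ 0})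
    have h00 : (μX {x | sInf ((fun a => μ x a - μ x (astar x)) '' {a | a ≠ astar x}) ≤ 0}).toReal = 0 :=
      le_antisymm h0 ENNReal.toReal_nonneg
    rcases this.mp h00 with h | h
    · exact h
    · exact absurd h hfin
  have hae : ∀ᵐ x ∂μX,
      ¬ (sInf ((fun a => μ x a - μ x (astar x)) '' {a | a ≠ astar x}) ≤ 0) := by
    rw [ae_iff]
    simpa using hnull
  -- a.e. measurability of x ↦ π x (astar x)
  have hg_meas : Measurable fun x => ∑ a, if (∀ b, μ x a ≤ μ x b) then π x a else 0 := by
    apply Finset.measurable_sum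
    intro a _
    have hset : MeasurableSet {x | ∀ b, μ x a ≤ μ x b} := by
      have : {x | ∀ b, μ x a ≤ μ x b} = ⋂ b, {x | μ x a ≤ μ x b} := by ext; simp
      rw [this]
      exact MeasurableSet.iInter fun b => measurableSet_le (hμm a) (hμm b)
    exact Measurable.ite hset (hπm a) measurable_const
  have hqae : (fun x => ∑ a, if (∀ b, μ x a ≤ μ x b) then π x a else 0)
      =ᵐ[μX] fun x => π x (astar x) := by
    filter_upwards [hae] with x hx
    push_neg at hx
    have h : ∀ a ∈ Finset.univ, (if (∀ b, μ x a ≤ μ x b) then π x a else 0)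
        = if a = astar x then π x a else 0 := by
      intro a _
      by_cases haa : a = astar x
      · subst haa
        rw [if_pos (fun b => hastar x b), if_pos rfl]
      · rw [if_neg, if_neg haa]
        intro hall
        have h1 := hΔle x a haa
        have h2 := hall (astar x)
        linarith
    rw [Finset.sum_congr rfl h, Finset.sum_ite_eq' Finset.univ (astar x)]
    simp
  have hq_aem : AEMeasurable (fun x => π x (astar x)) μX :=
    hg_meas.aemeasurable.congr hqae
  have hq_int : Integrable (fun x => π x (astar x)) μX := by
    apply Integrable.mono' (integrable_const (1:ℝ)) hq_aem.aestronglyMeasurable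
    exact ae_of_all _ fun x => by
      rw [Real.norm_eq_abs, abs_of_pos (hqpos x)]; exact hqle1 x
  have hqinv_int : Integrable (fun x => (π x (astar x))⁻¹) μX := by
    apply Integrable.mono' (integrable_const β⁻¹) hq_aem.inv.aestronglyMeasurable
    exact ae_of_all _ fun x => by
      rw [Real.norm_eq_abs, Pi.inv_apply, abs_of_pos (inv_pos.2 (hqpos x))]
      exact inv_anti₀ hβ (overlap x)
  -- integrability of the risk integrands
  have hR_meas : Measurable fun x => ∑ a, π x a * μ x a :=
    Finset.measurable_sum _ fun a _ => (hπm a).mul (hμm a)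
  have hRbd : ∀ x, |∑ a, π x a * μ x a| ≤ Cb := by
    intro x
    calc |∑ a, π x a * μ x a| ≤ ∑ a, |π x a * μ x a| := Finset.abs_sum_le_sum_abs _ _
      _ ≤ ∑ a, π x a * Cb := by
          apply Finset.sum_le_sum
          intro a _
          rw [abs_mul, abs_of_pos (hπpos x a)]
          exact mul_le_mul_of_nonneg_left (hCb x a) (hπpos x a).le
      _ = Cb := by rw [← Finset.sum_mul, hπsum, one_mul]
  have hR_int : Integrable (fun x => ∑ a, π x a * μ x a) μX := by
    apply Integrable.mono' (integrable_const Cb) hR_meas.aestronglyMeasurable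
    exact ae_of_all _ fun x => by rw [Real.norm_eq_abs]; exact hRbd x
  have hms_int : Integrable (fun x => μ x (astar x)) μX := by
    apply Integrable.mono' (integrable_const Cb) hms_meas.aestronglyMeasurable
    exact ae_of_all _ fun x => by rw [Real.norm_eq_abs]; exact hCb x _
  -- the pointwise excess risk
  set r : 𝒳 → ℝ := fun x => (∑ a, π x a * μ x a) - μ x (astar x) with hr_def
  have hr_int : Integrable r μX := hR_int.sub hms_int
  have hr_nonneg : ∀ x, 0 ≤ r x := by
    intro x
    have h1 : μ x (astar x) = ∑ a, π x a * μ x (astar x) := by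
      rw [← Finset.sum_mul, hπsum, one_mul]
    have h2 : ∑ a, π x a * μ x (astar x) ≤ ∑ a, π x a * μ x a :=
      Finset.sum_le_sum fun a _ => mul_le_mul_of_nonneg_left (hastar x a) (hπpos x a).le
    simp only [hr_def]
    linarith
  have hE0 : 0 ≤ ∫ x, r x ∂μX := integral_nonneg hr_nonneg
  -- key pointwise inequality
  have hkey : ∀ x, (1 - π x (astar x)) *
      sInf ((fun a => μ x a - μ x (astar x)) '' {a | a ≠ astar x}) ≤ r x := by
    intro x
    set Δ := sInf ((fun a => μ x a - μ x (astar x)) '' {a | a ≠ astar x}) with hΔdef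
    have h1 : ∑ a ∈ Finset.univ.erase (astar x), π x a = 1 - π x (astar x) := by
      rw [Finset.sum_erase_eq_sub (Finset.mem_univ _), hπsum]
    calc (1 - π x (astar x)) * Δ = ∑ a ∈ Finset.univ.erase (astar x), π x a * Δ := by
          rw [← Finset.sum_mul, h1]
      _ ≤ ∑ a ∈ Finset.univ.erase (astar x), π x a * (μ x a - μ x (astar x)) :=
          Finset.sum_le_sum fun a ha =>
            mul_le_mul_of_nonneg_left (hΔle x a (Finset.ne_of_mem_erase ha)) (hπpos x a).le
      _ ≤ ∑ a, π x a * (μ x a - μ x (astar x)) :=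
          Finset.sum_le_sum_of_subset_of_nonneg (Finset.erase_subset _ _)
            (fun a _ _ => mul_nonneg (hπpos x a).le (sub_nonneg.2 (hastar x a)))
      _ = r x := by
          simp only [hr_def, mul_sub, Finset.sum_sub_distrib, ← Finset.sum_mul, hπsum, one_mul]
  have hV_int : Integrable (fun x => 1 - π x (astar x)) μX := (integrable_const 1).sub hq_int
  -- per-u bound
  have hVu : ∀ u : ℝ, 0 < u → (∫ x, (1 - π x (astar x)) ∂μX)
      ≤ (c * u) ^ ν + (∫ x, r x ∂μX) / (M * u) := by
    intro u hu
    set S := {x | sInf ((fun a => μ x a - μ x (astar x)) '' {a | a ≠ astar x}) ≤ M * u} with hS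
    have hTm : MeasurableSet (toMeasurable μX S) := measurableSet_toMeasurable _ _
    have hMu : 0 < M * u := mul_pos hM hu
    have hpt : ∀ x, 1 - π x (astar x)
        ≤ (toMeasurable μX S).indicator (fun _ => (1:ℝ)) x + r x / (M * u) := by
      intro x
      by_cases hxT : x ∈ toMeasurable μX S
      · rw [Set.indicator_of_mem hxT]
        have h1 : 1 - π x (astar x) ≤ 1 := by linarith [hqpos x]
        have h2 := div_nonneg (hr_nonneg x) hMu.le
        linarith
      · rw [Set.indicator_of_notMem hxT, zero_add]
        have hxS : x ∉ S := fun h => hxT (subset_toMeasurable μX S h)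
        have hΔ : M * u < sInf ((fun a => μ x a - μ x (astar x)) '' {a | a ≠ astar x}) := by
          have : ¬ (sInf ((fun a => μ x a - μ x (astar x)) '' {a | a ≠ astar x}) ≤ M * u) := hxS
          linarith [not_le.mp this]
        have h3 : (1 - π x (astar x)) * (M * u) ≤ r x :=
          le_trans (mul_le_mul_of_nonneg_left hΔ.le (by linarith [hqle1 x])) (hkey x)
        rw [le_div_iff₀ hMu]
        exact h3
    have hind_int : Integrable ((toMeasurable μX S).indicator (fun _ => (1:ℝ))) μX :=
      (integrable_const 1).indicator hTm
    calc (∫ x, (1 - π x (astar x)) ∂μX)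
        ≤ ∫ x, ((toMeasurable μX S).indicator (fun _ => (1:ℝ)) x + r x / (M * u)) ∂μX :=
          integral_mono hV_int (hind_int.add (hr_int.div_const _)) hpt
      _ = (μX (toMeasurable μX S)).toReal + (∫ x, r x ∂μX) / (M * u) := by
          rw [integral_add hind_int (hr_int.div_const _), integral_indicator_const _ hTm,
            integral_div]
          simp
          rw [measureReal_def, measure_toMeasurable]
      _ ≤ (c * u) ^ ν + (∫ x, r x ∂μX) / (M * u) := by
          rw [measure_toMeasurable]
          have := margin u hu.le
          linarith
  -- the optimized bound
  have hVbound : (∫ x, (1 - π x (astar x)) ∂μX)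
      ≤ (ν + 1) * (c / (ν * M)) ^ (ν/(ν+1)) * (∫ x, r x ∂μX) ^ (ν/(ν+1)) := by
    rcases eq_or_lt_of_le hE0 with hE | hE
    · have hV0 : (∫ x, (1 - π x (astar x)) ∂μX) ≤ 0 := by
        by_contra hV
        push_neg at hV
        set V := ∫ x, (1 - π x (astar x)) ∂μX with hVdef
        have hu : 0 < c⁻¹ * (V / 2) ^ ((1:ℝ)/ν) := by positivity
        have hb := hVu _ hu
        rw [← hE] at hb
        have hcu : c * (c⁻¹ * (V / 2) ^ ((1:ℝ)/ν)) = (V / 2) ^ ((1:ℝ)/ν) := by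
          field_simp
        rw [hcu, ← Real.rpow_mul (by positivity), one_div, inv_mul_cancel₀ hν.ne',
          Real.rpow_one, zero_div, add_zero] at hb
        linarith
      have hz : (∫ x, r x ∂μX) ^ (ν/(ν+1)) = 0 := by
        rw [← hE, Real.zero_rpow hppos.ne']
      rw [hz, mul_zero]
      exact hV0
    · have hu : 0 < ((∫ x, r x ∂μX) / (ν * c ^ ν * M)) ^ ((1:ℝ)/(ν+1)) :=
        Real.rpow_pos_of_pos (by positivity) _
      have hb := hVu _ hu
      rwa [alg_opt ν c M _ hν hc hM hE] at hb
  -- rewrite the goal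
  have hI1 : (∫ x, ∑ a, π x a * ((if a = astar x then (1:ℝ) else 0) / π x a) ^ 2 ∂μX)
      = ∫ x, (π x (astar x))⁻¹ ∂μX := by
    apply integral_congr_ae
    exact ae_of_all _ hsum2
  have hI2 : (∫ x, ∑ a, π x a * ((if a = astar x then (1:ℝ) else 0) / π x a) ∂μX) = 1 := by
    rw [integral_congr_ae (ae_of_all _ hsum1 :
      (fun x => ∑ a, π x a * ((if a = astar x then (1:ℝ) else 0) / π x a)) =ᵐ[μX] fun _ => 1)]
    simp
  have hEeq : (∫ x, ∑ a, π x a * μ x a ∂μX) - (∫ x, μ x (astar x) ∂μX) = ∫ x, r x ∂μX :=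
    (integral_sub hR_int hms_int).symm
  rw [hI1, hI2, one_pow, hEeq]
  -- step 1 : variance ≤ V / β
  have hstep1 : (∫ x, (π x (astar x))⁻¹ ∂μX) - 1
      ≤ (∫ x, (1 - π x (astar x)) ∂μX) / β := by
    have he : (∫ x, (π x (astar x))⁻¹ ∂μX) - 1
        = ∫ x, ((π x (astar x))⁻¹ - 1) ∂μX := by
      rw [integral_sub hqinv_int (integrable_const 1)]
      simp
    rw [he, ← integral_div]
    apply integral_mono (hqinv_int.sub (integrable_const 1)) (hV_int.div_const β)
    intro x
    have hq := hqpos x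
    have hfrac : (π x (astar x))⁻¹ - 1 = (1 - π x (astar x)) / π x (astar x) := by
      field_simp
    simp only [Pi.sub_apply]
    rw [hfrac]
    gcongr
    · linarith [hqle1 x]
    · exact overlap x
  -- constant identity
  have hKeq : ((ν + 1) ^ ((ν + 1) / ν) * c / (ν * M)) ^ (ν / (ν + 1))
      = (ν + 1) * (c / (ν * M)) ^ (ν / (ν + 1)) := by
    rw [mul_div_assoc, Real.mul_rpow (Real.rpow_nonneg hν1.le _) (by positivity),
      ← Real.rpow_mul hν1.le]
    have : (ν + 1) / ν * (ν / (ν + 1)) = 1 := by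
      field_simp
    rw [this, Real.rpow_one]
  rw [hKeq]
  calc (∫ x, (π x (astar x))⁻¹ ∂μX) - 1
      ≤ (∫ x, (1 - π x (astar x)) ∂μX) / β := hstep1
    _ ≤ ((ν + 1) * (c / (ν * M)) ^ (ν/(ν+1)) * (∫ x, r x ∂μX) ^ (ν/(ν+1))) / β := by
        gcongr
    _ = (ν + 1) * (c / (ν * M)) ^ (ν / (ν + 1)) / β * (∫ x, r x ∂μX) ^ (ν / (ν + 1)) := by
        ring
end

section
/- Assume the margin condition: there exist M > 0, c > 0 and ν ∈ (0, ∞) such that P( Δ_min(X) ≤ M u ) ≤ (c u)^ν for all u ≥ 0. Then the probability of selecting a suboptimal action is controlled by the excess risk: P( A ≠ a*(X) ) ≤ K · ( R(π) − R* )^{ν/(ν+1)}, where K = ( (ν+1)^{(ν+1)/ν} c / (ν M) )^{ν/(ν+1)}. (Error-probability-to-excess-risk bound under the margin condition.) -/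
open MeasureTheory

lemma opt_bound' (M c ν E R : ℝ) (hM : 0 < M) (hc : 0 < c) (hν : 0 < ν) (hR : 0 ≤ R)
    (h : ∀ t : ℝ, 0 < t → E ≤ (c / M) ^ ν * t ^ ν + R / t) :
    E ≤ ((ν + 1) ^ ((ν + 1) / ν) * c / (ν * M)) ^ (ν / (ν + 1)) * R ^ (ν / (ν + 1)) := by
  have hx0 : 0 < c / M := div_pos hc hM
  set x := c / M with hxdef
  have hs : 0 < ν + 1 := by linarith
  set p := ν / (ν + 1) with hpdef
  set q := 1 / (ν + 1) with hqdef
  have hp0 : 0 < p := div_pos hν hs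
  have hq0 : 0 < q := by positivity
  have hpq : p + q = 1 := by
    rw [hpdef, hqdef, ← add_div, div_self hs.ne']
  have hνq : ν * q = p := by rw [hpdef, hqdef]; ring
  rcases eq_or_lt_of_le hR with hR0 | hR0
  · -- R = 0 case
    have hxν : 0 < x ^ ν := Real.rpow_pos_of_pos hx0 ν
    have hE : E ≤ 0 := by
      by_contra hE
      push_neg at hE
      set t := (E / 2 / x ^ ν) ^ (1 / ν) with htdef
      have ht0 : 0 < t := Real.rpow_pos_of_pos (by positivity) _
      have hb := h t ht0
      rw [← hR0, zero_div, add_zero] at hb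
      have htν : x ^ ν * t ^ ν = E / 2 := by
        rw [htdef, ← Real.rpow_mul (by positivity), one_div, inv_mul_cancel₀ hν.ne',
          Real.rpow_one]
        field_simp
      rw [htν] at hb
      linarith
    have : ((0:ℝ)) ^ p = 0 := Real.zero_rpow hp0.ne'
    rw [← hR0, this, mul_zero]
    exact hE
  · -- R > 0 case
    have hbase : 0 < ν * x ^ ν := mul_pos hν (Real.rpow_pos_of_pos hx0 ν)
    set θ := (ν * x ^ ν) ^ (-q) with hθdef
    have hθ0 : 0 < θ := Real.rpow_pos_of_pos hbase _
    set t0 := θ * R ^ q with ht0def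
    have hRq : 0 < R ^ q := Real.rpow_pos_of_pos hR0 _
    have ht00 : 0 < t0 := mul_pos hθ0 hRq
    have hθinv : θ⁻¹ = (ν * x ^ ν) ^ q := by
      rw [hθdef, Real.rpow_neg hbase.le, inv_inv]
    have hxνq : (x ^ ν) ^ q = x ^ p := by
      rw [← Real.rpow_mul hx0.le, hνq]
    have hxνp : (x ^ ν) ^ (-p) = x ^ (-(ν * p)) := by
      rw [← Real.rpow_mul hx0.le, mul_neg]
    have hθν : θ ^ ν = (ν * x ^ ν) ^ (-p) := by
      rw [hθdef, ← Real.rpow_mul hbase.le]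
      congr 1
      linarith [hνq]
    have ht0ν : t0 ^ ν = θ ^ ν * R ^ p := by
      rw [ht0def, Real.mul_rpow hθ0.le hRq.le, ← Real.rpow_mul hR0.le]
      congr 2
      linarith [hνq]
    have hRt : R / t0 = θ⁻¹ * R ^ p := by
      have key : R ^ p * R ^ q = R := by
        rw [← Real.rpow_add hR0, hpq, Real.rpow_one]
      rw [ht0def, div_eq_iff (mul_pos hθ0 hRq).ne']
      calc R = (θ⁻¹ * θ) * (R ^ p * R ^ q) := by
              rw [inv_mul_cancel₀ hθ0.ne', key, one_mul]
        _ = θ⁻¹ * R ^ p * (θ * R ^ q) := by ring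
    -- coefficient identity
    have hsum : x ^ ν * θ ^ ν + θ⁻¹ = (ν + 1) * (ν ^ (-p) * x ^ p) := by
      rw [hθν, hθinv, Real.mul_rpow hν.le (Real.rpow_nonneg hx0.le ν),
        Real.mul_rpow hν.le (Real.rpow_nonneg hx0.le ν), hxνq]
      have hνqe : ν ^ q = ν * ν ^ (-p) := by
        have : q = 1 + (-p) := by linarith
        rw [this, Real.rpow_add hν, Real.rpow_one]
      rw [hνqe, hxνp]
      have hxsplit : x ^ ν * (ν ^ (-p) * x ^ (-(ν * p))) = ν ^ (-p) * x ^ p := by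
        rw [mul_comm (x ^ ν), mul_assoc, ← Real.rpow_add hx0]
        congr 2
        have : ν * q = p := hνq
        nlinarith [hpq]
      rw [hxsplit]
      ring
    have hK : ((ν + 1) ^ ((ν + 1) / ν) * c / (ν * M)) ^ p = (ν + 1) * (ν ^ (-p) * x ^ p) := by
      have hcM : (ν + 1) ^ ((ν + 1) / ν) * c / (ν * M) = (ν + 1) ^ ((ν + 1) / ν) * (x / ν) := by
        rw [hxdef]; field_simp
      rw [hcM, Real.mul_rpow (Real.rpow_nonneg hs.le _) (by positivity),
        ← Real.rpow_mul hs.le]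
      have he1 : (ν + 1) / ν * p = 1 := by
        rw [hpdef]; field_simp
      rw [he1, Real.rpow_one, Real.div_rpow hx0.le hν.le, Real.rpow_neg hν.le]
      ring
    calc E ≤ x ^ ν * t0 ^ ν + R / t0 := h t0 ht00
      _ = (x ^ ν * θ ^ ν + θ⁻¹) * R ^ p := by rw [ht0ν, hRt]; ring
      _ = ((ν + 1) ^ ((ν + 1) / ν) * c / (ν * M)) ^ p * R ^ p := by rw [hsum, hK]

/-- **Error-probability-to-excess-risk bound under the margin condition.**
If `P(Δ_min(X) ≤ M u) ≤ (c u)^ν` for all `u ≥ 0`, then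
`P(A ≠ a*(X)) ≤ K (R(π) − R*)^{ν/(ν+1)}` with
`K = ((ν+1)^{(ν+1)/ν} c/(ν M))^{ν/(ν+1)}`, where
`P(A ≠ a*(X)) = E[1 − π(a*(X)|X)]`. -/
theorem stmt_10 {𝒳 𝒜 : Type*} [MeasurableSpace 𝒳] [MeasurableSpace 𝒜]
    [Fintype 𝒜] [DecidableEq 𝒜] [Nontrivial 𝒜]
    (μX : Measure 𝒳) [IsProbabilityMeasure μX]
    (μ : 𝒳 → 𝒜 → ℝ)
    (hμm : ∀ a, Measurable fun x => μ x a)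
    (hμb : ∃ Cb : ℝ, ∀ x a, |μ x a| ≤ Cb)
    (astar : 𝒳 → 𝒜) (hastarm : Measurable astar)
    (hastar : ∀ x a, μ x (astar x) ≤ μ x a)
    (π : 𝒳 → 𝒜 → ℝ)
    (hπm : ∀ a, Measurable fun x => π x a)
    (hπnn : ∀ x a, 0 ≤ π x a)
    (hπsum : ∀ x, ∑ a, π x a = 1)
    (M c ν : ℝ) (hM : 0 < M) (hc : 0 < c) (hν : 0 < ν)
    (margin : ∀ u : ℝ, 0 ≤ u →
      (μX {x | sInf ((fun a => μ x a - μ x (astar x)) '' {a | a ≠ astar x}) ≤ M * u}).toReal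
        ≤ (c * u) ^ ν) :
    (∫ x, (1 - π x (astar x)) ∂μX) ≤
      ((ν + 1) ^ ((ν + 1) / ν) * c / (ν * M)) ^ (ν / (ν + 1)) *
        ((∫ x, ∑ a, π x a * μ x a ∂μX) - ∫ x, μ x (astar x) ∂μX) ^ (ν / (ν + 1)) := by
  classical
  obtain ⟨Cb, hCb⟩ := hμb
  have hX : Nonempty 𝒳 := by
    by_contra h
    rw [not_nonempty_iff] at h
    have h1 := measure_univ (μ := μX)
    rw [Set.univ_eq_empty_iff.mpr h, measure_empty] at h1
    exact zero_ne_one h1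
  have hCb0 : 0 ≤ Cb :=
    (abs_nonneg _).trans (hCb (Classical.arbitrary 𝒳) (Classical.arbitrary 𝒜))
  -- notation
  set Δ : 𝒳 → ℝ := fun x => sInf ((fun a => μ x a - μ x (astar x)) '' {a | a ≠ astar x})
    with hΔdef
  set f1 : 𝒳 → ℝ := fun x => ∑ a, π x a * μ x a with hf1def
  set f2 : 𝒳 → ℝ := fun x => μ x (astar x) with hf2def
  -- f2 is the min, hence measurable
  have hf2min : ∀ x, f2 x = ⨅ a, μ x a := fun x =>
    le_antisymm (le_ciInf fun a => hastar x a)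
      (ciInf_le (Set.Finite.bddBelow (Set.finite_range _)) (astar x))
  have hf2m : Measurable f2 := by
    have : f2 = fun x => ⨅ a, μ x a := funext hf2min
    rw [this]
    exact Measurable.iInf hμm
  have hf1m : Measurable f1 :=
    Finset.measurable_sum _ fun a _ => (hπm a).mul (hμm a)
  -- π values in [0,1]
  have hπle1 : ∀ x a, π x a ≤ 1 := by
    intro x a
    rw [← hπsum x]
    exact Finset.single_le_sum (fun i _ => hπnn x i) (Finset.mem_univ a)
  -- integrability
  have hIf1 : Integrable f1 μX := by
    refine (integrable_const Cb).mono' hf1m.aestronglyMeasurable (ae_of_all _ fun x => ?_)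
    rw [Real.norm_eq_abs]
    calc |f1 x| ≤ ∑ a, |π x a * μ x a| := Finset.abs_sum_le_sum_abs _ _
      _ ≤ ∑ a, π x a * Cb := by
          refine Finset.sum_le_sum fun a _ => ?_
          rw [abs_mul, abs_of_nonneg (hπnn x a)]
          exact mul_le_mul_of_nonneg_left (hCb x a) (hπnn x a)
      _ = Cb := by rw [← Finset.sum_mul, hπsum x, one_mul]
  have hIf2 : Integrable f2 μX := by
    refine (integrable_const Cb).mono' hf2m.aestronglyMeasurable (ae_of_all _ fun x => ?_)
    rw [Real.norm_eq_abs]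
    exact hCb x (astar x)
  -- properties of Δ
  have hΔne : ∀ x, ((fun a => μ x a - μ x (astar x)) '' {a | a ≠ astar x}).Nonempty := by
    intro x
    obtain ⟨b, hb⟩ := exists_ne (astar x)
    exact ⟨_, ⟨b, hb, rfl⟩⟩
  have hΔbdd : ∀ x, BddBelow ((fun a => μ x a - μ x (astar x)) '' {a | a ≠ astar x}) :=
    fun x => (Set.toFinite _).bddBelow
  have hΔnn : ∀ x, 0 ≤ Δ x := by
    intro x
    refine le_csInf (hΔne x) ?_
    rintro y ⟨a, _, rfl⟩
    exact sub_nonneg.mpr (hastar x a)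
  have hΔle : ∀ x a, a ≠ astar x → Δ x ≤ μ x a - μ x (astar x) :=
    fun x a ha => csInf_le (hΔbdd x) ⟨a, ha, rfl⟩
  -- pointwise decomposition of the excess risk
  have hsplit : ∀ x, ∑ a, π x a * (μ x a - f2 x) = f1 x - f2 x := by
    intro x
    simp only [mul_sub, Finset.sum_sub_distrib, ← Finset.sum_mul, hπsum x, one_mul, hf1def]
  have hdiff_nonneg : ∀ x, 0 ≤ f1 x - f2 x := by
    intro x
    rw [← hsplit x]
    exact Finset.sum_nonneg fun a _ =>
      mul_nonneg (hπnn x a) (sub_nonneg.mpr (hastar x a))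
  have key_pt : ∀ (t : ℝ) (x : 𝒳), t ≤ Δ x → t * (1 - π x (astar x)) ≤ f1 x - f2 x := by
    intro t x htx
    have herase : ∑ a ∈ Finset.univ.erase (astar x), π x a = 1 - π x (astar x) := by
      have h1 := Finset.sum_erase_add Finset.univ (π x) (Finset.mem_univ (astar x))
      rw [hπsum x] at h1
      linarith
    have h2 : ∑ a ∈ Finset.univ.erase (astar x), π x a * (μ x a - f2 x) = f1 x - f2 x := by
      have h3 := Finset.sum_erase_add Finset.univ (fun a => π x a * (μ x a - f2 x))
        (Finset.mem_univ (astar x))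
      rw [hsplit x] at h3
      simp only [hf2def, sub_self, mul_zero, add_zero] at h3
      exact h3
    calc t * (1 - π x (astar x)) = ∑ a ∈ Finset.univ.erase (astar x), π x a * t := by
          rw [← Finset.sum_mul, herase]; ring
      _ ≤ ∑ a ∈ Finset.univ.erase (astar x), π x a * (μ x a - f2 x) := by
          refine Finset.sum_le_sum fun a ha => ?_
          have hane : a ≠ astar x := (Finset.mem_erase.mp ha).1
          exact mul_le_mul_of_nonneg_left (htx.trans (hΔle x a hane)) (hπnn x a)
      _ = f1 x - f2 x := h2
  -- the excess risk R
  have hRsub : ∫ x, (f1 x - f2 x) ∂μX = (∫ x, f1 x ∂μX) - ∫ x, f2 x ∂μX :=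
    integral_sub hIf1 hIf2
  have hRnn : 0 ≤ (∫ x, f1 x ∂μX) - ∫ x, f2 x ∂μX := by
    rw [← hRsub]
    exact integral_nonneg hdiff_nonneg
  by_cases hI : Integrable (fun x => 1 - π x (astar x)) μX
  · -- main case
    refine opt_bound' M c ν _ _ hM hc hν hRnn ?_
    intro t ht
    set g : 𝒳 → ℝ := fun x => (f1 x - f2 x) / t with hgdef
    have hIg : Integrable g μX := (hIf1.sub hIf2).div_const t
    set S : Set 𝒳 := {x | Δ x ≤ t} with hSdef
    have hpt : ∀ x, (1 - π x (astar x)) - g x ≤ S.indicator (fun _ => (1:ℝ)) x := by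
      intro x
      by_cases hx : x ∈ S
      · rw [Set.indicator_of_mem hx]
        have hg0 : 0 ≤ g x := div_nonneg (hdiff_nonneg x) ht.le
        have := hπnn x (astar x)
        linarith
      · rw [Set.indicator_of_notMem hx]
        have hx' : ¬ (Δ x ≤ t) := hx
        have htx : t ≤ Δ x := (not_le.mp hx').le
        have := key_pt t x htx
        have hgle : (1 - π x (astar x)) ≤ g x := by
          rw [hgdef, le_div_iff₀ ht]
          linarith
        linarith
    have hIsub : Integrable (fun x => (1 - π x (astar x)) - g x) μX := hI.sub hIg
    have step1 : (∫ x, (1 - π x (astar x)) ∂μX) - ∫ x, g x ∂μX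
        ≤ (μX S).toReal := by
      rw [← integral_sub hI hIg]
      calc ∫ x, ((1 - π x (astar x)) - g x) ∂μX
          ≤ ∫ x, max ((1 - π x (astar x)) - g x) 0 ∂μX :=
            integral_mono hIsub hIsub.pos_part fun x => le_max_left _ _
        _ = (∫⁻ x, ENNReal.ofReal (max ((1 - π x (astar x)) - g x) 0) ∂μX).toReal :=
            integral_eq_lintegral_of_nonneg_ae (ae_of_all _ fun x => le_max_right _ _)
              hIsub.pos_part.aestronglyMeasurable
        _ ≤ (μX S).toReal := by
            refine ENNReal.toReal_mono (measure_ne_top _ _)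
              (le_trans (lintegral_mono fun x => ?_) (lintegral_indicator_one_le S))
            by_cases hx : x ∈ S
            · simp only [Set.indicator_of_mem hx, Pi.one_apply]
              refine le_trans (ENNReal.ofReal_le_ofReal (max_le ?_ zero_le_one)) ?_
              · have := hpt x
                rwa [Set.indicator_of_mem hx] at this
              · simp
            · have h0 : (1 - π x (astar x)) - g x ≤ 0 := by
                have := hpt x
                rwa [Set.indicator_of_notMem hx] at this
              simp [Set.indicator_of_notMem hx, max_eq_right h0, ENNReal.ofReal_of_nonpos,
                le_refl]
    have step2 : (μX S).toReal ≤ (c / M) ^ ν * t ^ ν := by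
      have hm := margin (t / M) (by positivity)
      have heq : M * (t / M) = t := by field_simp
      rw [heq] at hm
      calc (μX S).toReal ≤ (c * (t / M)) ^ ν := hm
        _ = (c / M) ^ ν * t ^ ν := by
            rw [show c * (t / M) = (c / M) * t by ring,
              Real.mul_rpow (by positivity) ht.le]
    have hgint : ∫ x, g x ∂μX = ((∫ x, f1 x ∂μX) - ∫ x, f2 x ∂μX) / t := by
      rw [hgdef]
      simp only [div_eq_mul_inv]
      rw [integral_mul_const, hRsub]
    calc (∫ x, (1 - π x (astar x)) ∂μX)
        ≤ (μX S).toReal + ∫ x, g x ∂μX := by linarith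
      _ ≤ (c / M) ^ ν * t ^ ν + ((∫ x, f1 x ∂μX) - ∫ x, f2 x ∂μX) / t := by
          rw [hgint]; linarith
  · -- non-integrable: LHS is zero by convention
    rw [integral_undef hI]
    exact mul_nonneg (Real.rpow_nonneg (by positivity) _) (Real.rpow_nonneg hRnn _)
end
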